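/- Let (F_n) be a linear-like semiring family of graphs and let G and H be finite simple graphs. If there exists d ≥ 1 and a graph homomorphism G ⋉ d → H ⋉ d (i.e., a fractional graph homomorphism from G to H), then η_F^frac(G) ≤ η_F^frac(H). -/

import Mathlib

open SimpleGraph

universe u v

/-- The join `G + H` of two simple graphs. -/
def graphJoin {α : Type u} {β : Type v} (G : SimpleGraph α) (H : SimpleGraph β) :
    SimpleGraph (α ⊕ β) where
  Adj x y :=
    match x, y with
    | Sum.inl a, Sum.inl a' => G.Adj a a'
    | Sum.inr b, Sum.inr b' => H.Adj b b'
    | Sum.inl _, Sum.inr _ => True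
    | Sum.inr _, Sum.inl _ => True
  symm := by
    constructor
    rintro (a | b) (a' | b') h
    · exact h.symm
    · trivial
    · trivial
    · exact h.symm
  loopless := by
    constructor
    rintro (a | b) h
    · exact G.loopless.irrefl a h
    · exact H.loopless.irrefl b h

/-- The disjunctive product `G * H`. -/
def disjProd {α : Type u} {β : Type v} (G : SimpleGraph α) (H : SimpleGraph β) :
    SimpleGraph (α × β) where
  Adj p q := G.Adj p.1 q.1 ∨ H.Adj p.2 q.2
  symm := ⟨fun p q h => h.imp (fun h' => h'.symm) (fun h' => h'.symm)⟩
  loopless := ⟨fun p h => h.elim (fun h' => G.loopless.irrefl p.1 h') (fun h' => H.loopless.irrefl p.2 h')⟩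

/-- The lexicographic product `G ⋉ H`. -/
def lexProd {α : Type u} {β : Type v} (G : SimpleGraph α) (H : SimpleGraph β) :
    SimpleGraph (α × β) where
  Adj p q := G.Adj p.1 q.1 ∨ (p.1 = q.1 ∧ H.Adj p.2 q.2)
  symm := ⟨fun p q h => h.imp (fun h' => h'.symm) (fun h' => ⟨h'.1.symm, h'.2.symm⟩)⟩
  loopless := ⟨fun p h => h.elim (fun h' => G.loopless.irrefl p.1 h') (fun h' => H.loopless.irrefl p.2 h'.2)⟩

/-- The `d`-fold blowup `G ⋉ d`, i.e. the lexicographic product `G ⋉ K_d`. -/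
def blowup {α : Type u} (G : SimpleGraph α) (d : ℕ) : SimpleGraph (α × Fin d) :=
  lexProd G (⊤ : SimpleGraph (Fin d))

/-- The `d`-fractionalization `G/d`: the graph of `d`-cliques of `G`, with two
`d`-cliques adjacent iff they are disjoint and pairwise adjacent. -/
def fracGraph {α : Type u} (G : SimpleGraph α) (d : ℕ) :
    SimpleGraph {S : Finset α // S.card = d ∧ G.IsClique (S : Set α)} where
  Adj S T := S ≠ T ∧ Disjoint S.val T.val ∧ ∀ a ∈ S.val, ∀ b ∈ T.val, G.Adj a b
  symm := by
    constructor
    rintro S T ⟨hne, hd, hadj⟩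
    exact ⟨hne.symm, hd.symm, fun b hb a ha => (hadj a ha b hb).symm⟩
  loopless := ⟨fun S h => h.1 rfl⟩

/-- The `n`-fold disjunctive power `G^{*n}`. -/
def disjPow {α : Type u} (G : SimpleGraph α) (n : ℕ) :
    SimpleGraph (Fin n → α) where
  Adj f g := ∃ i, G.Adj (f i) (g i)
  symm := ⟨fun f g ⟨i, h⟩ => ⟨i, h.symm⟩⟩
  loopless := ⟨fun f ⟨i, h⟩ => G.loopless.irrefl _ h⟩

/-- A semiring family of graphs. -/
structure SemiringFamily where
  V : ℕ → Type u
  F : ∀ n, SimpleGraph (V n)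
  isEmpty_zero : IsEmpty (V 0)
  nonempty_one : Nonempty (V 1)
  add_hom : ∀ n m : ℕ, Nonempty (graphJoin (F n) (F m) →g F (n + m))
  mul_hom : ∀ n m : ℕ, Nonempty (disjProd (F n) (F m) →g F (n * m))

/-- The `F`-number: the least `n` such that `G → F_n`. -/
noncomputable def etaF (F : SemiringFamily.{u}) {α : Type v} (G : SimpleGraph α) : ℕ :=
  sInf {n : ℕ | Nonempty (G →g F.F n)}

/-- The fractional `F`-number. -/
noncomputable def etaFrac (F : SemiringFamily.{u}) {α : Type v} (G : SimpleGraph α) : ℝ :=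
  sInf {x : ℝ | ∃ n d : ℕ, 1 ≤ d ∧ Nonempty (G →g fracGraph (F.F n) d) ∧ x = (n : ℝ) / d}

/-- The asymptotic `F`-number. -/
noncomputable def etaAsymp (F : SemiringFamily.{u}) {α : Type v} (G : SimpleGraph α) : ℝ :=
  sInf {x : ℝ | ∃ n : ℕ, 1 ≤ n ∧ x = (etaF F (disjPow G n) : ℝ) ^ ((1 : ℝ) / n)}

/-- The orthogonal complement of a set of vertices. -/
def perp {α : Type u} (G : SimpleGraph α) (S : Set α) : Set α :=
  {v | ∀ s ∈ S, G.Adj v s}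

/-- A flat is a set of vertices with `S^{⊥⊥} = S`. -/
def IsFlat {α : Type u} (G : SimpleGraph α) (S : Set α) : Prop :=
  perp G (perp G S) = S

/-- Homomorphic equivalence of two graphs. -/
def HomEquiv {α : Type u} {β : Type v} (G : SimpleGraph α) (H : SimpleGraph β) : Prop :=
  Nonempty (G →g H) ∧ Nonempty (H →g G)

/-- A linear-like semiring family: every flat of `F_n` induces a subgraph with some
clique number `k`, homomorphically equivalent to `F_k`. -/
structure LinearLikeFamily extends SemiringFamily where
  linearLike : ∀ n (S : Set (V n)), IsFlat (F n) S →
    ∃ k : ℕ, (∃ s : Finset S, ((F n).induce S).IsNClique k s) ∧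
      (∀ s : Finset S, ¬ ((F n).induce S).IsNClique (k + 1) s) ∧
      HomEquiv ((F n).induce S) (F k)

universe w

/-!
A homomorphism `H → F_n/e` is the same thing as a homomorphism `H ⋉ e → F_n` (list each
`e`-clique in some order). So a fractional colouring `H ⋉ e → F_n` and a homomorphism
`G ⋉ d → H ⋉ d` combine, after one more blowup, into
`G ⋉ de → (H ⋉ d) ⋉ e → (H ⋉ e) * K_d → F_n * F_d → F_{nd}`, a fractional colouring of
`G` with the same ratio `nd / de = n / e`.
-/

section Blowup

variable {α β γ δ : Type*}

lemma blowup_adj {G : SimpleGraph α} {d : ℕ} {p q : α × Fin d} :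
    (blowup G d).Adj p q ↔ G.Adj p.1 q.1 ∨ (p.1 = q.1 ∧ p.2 ≠ q.2) :=
  Iff.rfl

def lexProdMapLeft {G : SimpleGraph α} {H : SimpleGraph β} (f : G →g H) (K : SimpleGraph γ) :
    lexProd G K →g lexProd H K where
  toFun p := (f p.1, p.2)
  map_rel' := by
    rintro ⟨v, i⟩ ⟨v', j⟩ (hadj | ⟨rfl, hij⟩)
    exacts [Or.inl (f.map_adj hadj), Or.inr ⟨rfl, hij⟩]

def lexProdLexProdToDisjProd (H : SimpleGraph α) (K : SimpleGraph β) (L : SimpleGraph γ) :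
    lexProd (lexProd H K) L →g disjProd (lexProd H L) K where
  toFun p := ((p.1.1, p.2), p.1.2)
  map_rel' := by
    rintro ⟨⟨w, a⟩, b⟩ ⟨⟨w', a'⟩, b'⟩ ((hw | ⟨rfl, ha⟩) | ⟨hwa, hb⟩)
    · exact Or.inl (Or.inl hw)
    · exact Or.inr ha
    · exact Or.inl (Or.inr ⟨(Prod.mk.inj hwa).1, hb⟩)

def disjProdMap {G : SimpleGraph α} {G' : SimpleGraph β} {H : SimpleGraph γ}
    {H' : SimpleGraph δ} (f : G →g G') (g : H →g H') : disjProd G H →g disjProd G' H' where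
  toFun p := (f p.1, g p.2)
  map_rel' h := h.imp f.map_adj g.map_adj

def blowupMulIso (G : SimpleGraph α) (d e : ℕ) :
    blowup G (d * e) ≃g blowup (blowup G d) e where
  toEquiv := (Equiv.prodCongr (Equiv.refl α) finProdFinEquiv.symm).trans
    (Equiv.prodAssoc α (Fin d) (Fin e)).symm
  map_rel_iff' := by
    rintro ⟨v, k⟩ ⟨v', k'⟩
    obtain ⟨⟨a, b⟩, rfl⟩ := finProdFinEquiv.surjective k
    obtain ⟨⟨a', b'⟩, rfl⟩ := finProdFinEquiv.surjective k'
    simp only [Equiv.trans_apply, Equiv.prodCongr_apply, Equiv.coe_refl, Prod.map_apply, id_eq,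
      Equiv.symm_apply_apply, Equiv.prodAssoc_symm_apply, blowup_adj,
      finProdFinEquiv.injective.ne_iff, ne_eq, Prod.ext_iff]
    tauto

noncomputable def blowupHomOfFracGraphHom {H : SimpleGraph β} {F : SimpleGraph γ} {e : ℕ}
    (g : H →g fracGraph F e) : blowup H e →g F where
  toFun p := ((Finset.equivFinOfCardEq (g p.1).2.1).symm p.2 : γ)
  map_rel' := by
    rintro ⟨w, i⟩ ⟨w', j⟩ (hww' | ⟨rfl, hij⟩)
    · exact (g.map_adj hww').2.2 _ (Finset.coe_mem _) _ (Finset.coe_mem _)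
    · refine (g w).2.2 (Finset.coe_mem _) (Finset.coe_mem _) fun hEq => hij ?_
      exact (Finset.equivFinOfCardEq (g w).2.1).symm.injective (Subtype.ext hEq)

noncomputable def fracGraphHomOfBlowupHom {G : SimpleGraph α} {F : SimpleGraph γ} {e : ℕ}
    (he : 1 ≤ e) (f : blowup G e →g F) : G →g fracGraph F e := by
  classical
  have fiber_adj : ∀ {v v' : α} {i j : Fin e}, G.Adj v v' ∨ (v = v' ∧ i ≠ j) →
      F.Adj (f (v, i)) (f (v', j)) := fun h => f.map_adj h
  let fiber (v : α) : Finset γ := Finset.univ.map ⟨fun i => f (v, i),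
    fun i j hij => by_contra fun hne => (fiber_adj (.inr ⟨rfl, hne⟩)).ne hij⟩
  have mem_fiber {v : α} {x : γ} : x ∈ fiber v ↔ ∃ i, f (v, i) = x := by
    simp only [fiber, Finset.mem_map, Finset.mem_univ, true_and]; rfl
  refine ⟨fun v => ⟨fiber v, by simp [fiber], ?_⟩, ?_⟩
  · rintro _ hx _ hy hxy
    obtain ⟨i, rfl⟩ := mem_fiber.1 hx
    obtain ⟨j, rfl⟩ := mem_fiber.1 hy
    exact fiber_adj (.inr ⟨rfl, fun h => hxy (h ▸ rfl)⟩)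
  · intro v v' hvv'
    have hadj : ∀ x ∈ fiber v, ∀ y ∈ fiber v', F.Adj x y := by
      rintro _ hx _ hy
      obtain ⟨i, rfl⟩ := mem_fiber.1 hx
      obtain ⟨j, rfl⟩ := mem_fiber.1 hy
      exact fiber_adj (.inl hvv')
    have hdisj : Disjoint (fiber v) (fiber v') :=
      Finset.disjoint_left.2 fun x hx hx' => (hadj x hx x hx').ne rfl
    refine ⟨fun hEq => ?_, hdisj, hadj⟩
    have hx : f (v, ⟨0, he⟩) ∈ fiber v := mem_fiber.2 ⟨_, rfl⟩
    have hx' : f (v, ⟨0, he⟩) ∈ fiber v' := by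
      rwa [show fiber v' = fiber v from congrArg Subtype.val hEq.symm]
    exact Finset.disjoint_left.1 hdisj hx hx'

def blowupOneHom (G : SimpleGraph α) : blowup G 1 →g G where
  toFun := Prod.fst
  map_rel' := by
    rintro ⟨v, i⟩ ⟨v', j⟩ (h | ⟨-, hij⟩)
    exacts [h, absurd (Subsingleton.elim i j) hij]

end Blowup

namespace SemiringFamily

variable {α β : Type*} (F : SemiringFamily.{u})

noncomputable def completeGraphHom : ∀ m, (⊤ : SimpleGraph (Fin m)) →g F.F m
  | 0 => ⟨Fin.elim0, fun {a} => a.elim0⟩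
  | m + 1 => (F.add_hom m 1).some.comp
    { toFun := Fin.lastCases (Sum.inr F.nonempty_one.some) (Sum.inl <| completeGraphHom m ·)
      map_rel' := by
        intro a b hab
        induction a using Fin.lastCases <;> induction b using Fin.lastCases <;>
          simp_all [graphJoin]
        exact (completeGraphHom m).map_adj hab }

lemma exists_hom_fracGraph [Fintype β] (H : SimpleGraph β) :
    ∃ n e, 1 ≤ e ∧ Nonempty (H →g fracGraph (F.F n) e) :=
  ⟨Fintype.card β, 1, le_rfl, ⟨fracGraphHomOfBlowupHom le_rfl <|
    (F.completeGraphHom _).comp <| H.colorable_of_fintype.some.comp (blowupOneHom H)⟩⟩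

lemma nonempty_hom_fracGraph_mul {G : SimpleGraph α} {H : SimpleGraph β} {d e n : ℕ}
    (hd : 1 ≤ d) (he : 1 ≤ e) (f : blowup G d →g blowup H d)
    (g : H →g fracGraph (F.F n) e) :
    Nonempty (G →g fracGraph (F.F (n * d)) (d * e)) :=
  ⟨fracGraphHomOfBlowupHom (Nat.mul_pos hd he) <|
    (F.mul_hom n d).some.comp <|
      (disjProdMap (blowupHomOfFracGraphHom g) (F.completeGraphHom d)).comp <|
        (lexProdLexProdToDisjProd H ⊤ ⊤).comp <|
          (lexProdMapLeft f ⊤).comp (blowupMulIso G d e).toHom⟩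

lemma etaFrac_le {G : SimpleGraph α} {n e : ℕ} (he : 1 ≤ e) (g : G →g fracGraph (F.F n) e) :
    etaFrac F G ≤ n / e :=
  csInf_le ⟨0, by rintro _ ⟨n, e, -, -, rfl⟩; positivity⟩ ⟨n, e, he, ⟨g⟩, rfl⟩

lemma le_etaFrac {H : SimpleGraph β} {r : ℝ}
    (hne : ∃ n e, 1 ≤ e ∧ Nonempty (H →g fracGraph (F.F n) e))
    (h : ∀ n e, 1 ≤ e → (H →g fracGraph (F.F n) e) → r ≤ n / e) :
    r ≤ etaFrac F H := by
  obtain ⟨n, e, he, ⟨g⟩⟩ := hne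
  refine le_csInf ⟨_, n, e, he, ⟨g⟩, rfl⟩ ?_
  rintro _ ⟨n, e, he, ⟨g⟩, rfl⟩
  exact h n e he g

end SemiringFamily

theorem linearLike_etaFrac_frac_monotone_general (F : LinearLikeFamily.{u}) {α : Type v} {β : Type w}
    [Fintype β] (G : SimpleGraph α) (H : SimpleGraph β)
    (h : ∃ d : ℕ, 1 ≤ d ∧ Nonempty (blowup G d →g blowup H d)) :
    etaFrac F.toSemiringFamily G ≤ etaFrac F.toSemiringFamily H := by
  obtain ⟨d, hd, ⟨f⟩⟩ := h
  refine F.le_etaFrac (F.exists_hom_fracGraph H) fun n e he g => ?_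
  obtain ⟨g'⟩ := F.nonempty_hom_fracGraph_mul hd he f g
  have hd0 : (d : ℝ) ≠ 0 := Nat.cast_ne_zero.2 (by omega)
  calc etaFrac F.toSemiringFamily G ≤ (n * d : ℕ) / (d * e : ℕ) :=
        F.etaFrac_le (Nat.mul_pos hd he) g'
    _ = n / e := by push_cast; rw [mul_comm (d : ℝ), mul_div_mul_right _ _ hd0]

/-- The fractional `F`-number of a linear-like family is monotone under
fractional graph homomorphisms. -/
theorem linearLike_etaFrac_frac_monotone (F : LinearLikeFamily.{u}) {α : Type v} {β : Type w}
    [Fintype α] [Fintype β] (G : SimpleGraph α) (H : SimpleGraph β)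
    (h : ∃ d : ℕ, 1 ≤ d ∧ Nonempty (blowup G d →g blowup H d)) :
    etaFrac F.toSemiringFamily G ≤ etaFrac F.toSemiringFamily H :=
  linearLike_etaFrac_frac_monotone_general F G H h
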